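/- Let δ ≥ 0, C > 0 and γ > 2Cδ + δ². Suppose there exists f > 0 such that sup_{i,k} |W_{ik} − W̃_{ik}/f| ≤ δ, that 0 ≤ W_{ik} ≤ C for all i, k, and that inf_i D_{ii}/(mn) > γ. Then both ‖D^{-1/2} W − D̃^{-1/2} W̃‖₂ and ‖D^{-1/2} W − D̃^{-1/2} W̃‖_F are bounded by δ/√γ + (2Cδ + δ²)(C + δ) / ( γ·√(γ − 2Cδ − δ²) + √γ·(γ − 2Cδ − δ²) ). -/

import Mathlib

open scoped BigOperators

/-- The spectral (ℓ²-operator) norm of a real matrix. -/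
noncomputable def specNorm {n m : ℕ} (A : Matrix (Fin n) (Fin m) ℝ) : ℝ :=
  ‖LinearMap.toContinuousLinearMap (Matrix.toEuclideanLin A)‖

/-- The Frobenius norm of a real matrix. -/
noncomputable def frobNorm {n m : ℕ} (A : Matrix (Fin n) (Fin m) ℝ) : ℝ :=
  Real.sqrt (∑ i, ∑ j, (A i j) ^ 2)

/-!
Since `D̃^{-1/2} W̃` is unchanged when `W̃` is replaced by `W' = W̃ / f`, it suffices to compare
`W` with `W'`, which is entrywise `δ`-close to it. Entrywise products then differ by at most
`2Cδ + δ²`, so the normalized degrees `D_ii / (mn)` and `D'_ii / (mn)` differ by at most that much;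
in particular `D'_ii / (mn) > γ - 2Cδ - δ²`. The identity
`a^{-1/2} - b^{-1/2} = (b - a) / (√a √b (√a + √b))` then bounds every entry of the difference by
`E / √(mn)`, where `E` is the claimed bound (and `γ √β + √γ β = √γ √β (√γ + √β)` with
`β = γ - 2Cδ - δ²` is where its denominator comes from). Summing `mn` squares gives `E` for the
Frobenius norm, which dominates the spectral norm.
-/

open Finset

lemma specNorm_le_frobNorm {n m : ℕ} (A : Matrix (Fin n) (Fin m) ℝ) :
    specNorm A ≤ frobNorm A := by
  refine ContinuousLinearMap.opNorm_le_bound _ (Real.sqrt_nonneg _) fun x => ?_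
  have hrow : ∀ i, (∑ k, A i k * x k) ^ 2 ≤ (∑ k, A i k ^ 2) * ∑ k, ‖x k‖ ^ 2 := fun i => by
    simpa only [Real.norm_eq_abs, sq_abs] using sum_mul_sq_le_sq_mul_sq univ (A i) x
  rw [EuclideanSpace.norm_eq, EuclideanSpace.norm_eq, frobNorm, ← Real.sqrt_mul (by positivity),
    sum_mul]
  refine Real.sqrt_le_sqrt (sum_le_sum fun i _ => ?_)
  simpa [Matrix.mulVec, dotProduct] using hrow i

lemma frobNorm_le_of_forall_abs_le {n m : ℕ} (A : Matrix (Fin n) (Fin m) ℝ) {ε : ℝ} (hε : 0 ≤ ε)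
    (hA : ∀ i k, |A i k| ≤ ε) : frobNorm A ≤ √(n * m) * ε := by
  have hsq : ∀ i k, A i k ^ 2 ≤ ε ^ 2 := fun i k =>
    sq_le_sq.2 ((hA i k).trans_eq (abs_of_nonneg hε).symm)
  calc frobNorm A ≤ √(∑ _i : Fin n, ∑ _k : Fin m, ε ^ 2) :=
        Real.sqrt_le_sqrt (sum_le_sum fun i _ => sum_le_sum fun k _ => hsq i k)
    _ = √(n * m) * ε := by
        simp only [sum_const, card_univ, Fintype.card_fin, nsmul_eq_mul]
        rw [← mul_assoc, Real.sqrt_mul (by positivity), Real.sqrt_sq hε]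

lemma abs_le_add_of_abs_sub_le {a b C δ : ℝ} (ha : |a| ≤ C) (hab : |a - b| ≤ δ) :
    |b| ≤ C + δ := by
  have := abs_sub_abs_le_abs_sub b a
  rw [abs_sub_comm b] at this
  linarith

lemma abs_mul_sub_mul_le {a b a' b' C δ : ℝ} (ha : |a| ≤ C) (hb : |b| ≤ C)
    (haa' : |a - a'| ≤ δ) (hbb' : |b - b'| ≤ δ) : |a * b - a' * b'| ≤ 2 * C * δ + δ ^ 2 := by
  have hb' : |b'| ≤ C + δ := abs_le_add_of_abs_sub_le hb hbb'
  calc |a * b - a' * b'| = |a * (b - b') + b' * (a - a')| := by ring_nf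
    _ ≤ |a| * |b - b'| + |b'| * |a - a'| := (abs_add_le _ _).trans_eq (by rw [abs_mul, abs_mul])
    _ ≤ C * δ + (C + δ) * δ := by
        gcongr
        · exact (abs_nonneg _).trans ha
        · exact (abs_nonneg _).trans hb'
    _ = 2 * C * δ + δ ^ 2 := by ring

def affinityDegree {ι κ : Type*} [Fintype ι] [Fintype κ] (W : Matrix ι κ ℝ) (i : ι) : ℝ :=
  ∑ j, ∑ k, W i k * W j k

lemma abs_affinityDegree_sub_le {ι κ : Type*} [Fintype ι] [Fintype κ] {W W' : Matrix ι κ ℝ}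
    {C δ : ℝ} (hW : ∀ i k, |W i k| ≤ C) (hWW' : ∀ i k, |W i k - W' i k| ≤ δ) (i : ι) :
    |affinityDegree W i - affinityDegree W' i| ≤
      Fintype.card ι * Fintype.card κ * (2 * C * δ + δ ^ 2) := by
  have hsum : affinityDegree W i - affinityDegree W' i =
      ∑ p : ι × κ, (W i p.2 * W p.1 p.2 - W' i p.2 * W' p.1 p.2) := by
    simp only [affinityDegree, Fintype.sum_prod_type, sum_sub_distrib]
  calc |affinityDegree W i - affinityDegree W' i|
      ≤ ∑ p : ι × κ, |W i p.2 * W p.1 p.2 - W' i p.2 * W' p.1 p.2| :=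
        hsum ▸ abs_sum_le_sum_abs _ _
    _ ≤ ∑ _p : ι × κ, (2 * C * δ + δ ^ 2) :=
        sum_le_sum fun p _ => abs_mul_sub_mul_le (hW _ _) (hW _ _) (hWW' _ _) (hWW' _ _)
    _ = Fintype.card ι * Fintype.card κ * (2 * C * δ + δ ^ 2) := by
        simp only [sum_const, card_univ, Fintype.card_prod, nsmul_eq_mul, Nat.cast_mul]

lemma affinityDegree_div {ι κ : Type*} [Fintype ι] [Fintype κ] (W : Matrix ι κ ℝ) (f : ℝ) (i : ι) :
    affinityDegree (fun i k => W i k / f) i = affinityDegree W i / f ^ 2 := by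
  simp only [affinityDegree, sum_div]
  congr! 2 with j - k -
  ring

lemma inv_sqrt_div_sq_mul_div {f : ℝ} (hf : 0 < f) (x y : ℝ) :
    (√(x / f ^ 2))⁻¹ * (y / f) = (√x)⁻¹ * y := by
  rw [Real.sqrt_div' _ (by positivity), Real.sqrt_sq hf.le]
  rcases eq_or_ne (√x) 0 with h | h
  · simp [h]
  · field_simp

lemma inv_sqrt_mul_sub_inv_sqrt_mul_eq_div_sqrt {a : ℝ} (ha : 0 < a) (x y w w' : ℝ) :
    (√x)⁻¹ * w - (√y)⁻¹ * w' = ((√(x / a))⁻¹ * w - (√(y / a))⁻¹ * w') / √a := by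
  have : 0 < √a := Real.sqrt_pos.2 ha
  rw [Real.sqrt_div' _ ha.le, Real.sqrt_div' _ ha.le, inv_div, inv_div]
  field_simp

lemma abs_inv_sqrt_sub_inv_sqrt_le {a b c d e : ℝ} (hc : 0 < c) (hd : 0 < d)
    (hca : c ≤ a) (hdb : d ≤ b) (hab : |a - b| ≤ e) :
    |(√a)⁻¹ - (√b)⁻¹| ≤ e / (√c * √d * (√c + √d)) := by
  have hsa : 0 < √a := Real.sqrt_pos.2 (hc.trans_le hca)
  have hsb : 0 < √b := Real.sqrt_pos.2 (hd.trans_le hdb)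
  have key : (√a)⁻¹ - (√b)⁻¹ = (b - a) / (√a * √b * (√a + √b)) := by
    field_simp
    linear_combination Real.sq_sqrt (hd.trans_le hdb).le - Real.sq_sqrt (hc.trans_le hca).le
  rw [key, abs_div, abs_sub_comm b a, abs_of_pos (by positivity : 0 < √a * √b * (√a + √b))]
  gcongr
  exact (abs_nonneg _).trans hab

lemma abs_inv_sqrt_mul_sub_inv_sqrt_mul_le {x y w w' γ N δ K : ℝ} (hNγ : N < γ) (hx : γ < x)
    (hxy : |x - y| ≤ N) (hww' : |w - w'| ≤ δ) (hw' : |w'| ≤ K) :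
    |(√x)⁻¹ * w - (√y)⁻¹ * w'| ≤
      δ / √γ + N * K / (γ * √(γ - N) + √γ * (γ - N)) := by
  have hN : 0 ≤ N := (abs_nonneg _).trans hxy
  have hγ : 0 < γ := hN.trans_lt hNγ
  have hβ : 0 < γ - N := sub_pos.2 hNγ
  have hy : γ - N ≤ y := by linarith [(abs_le.1 hxy).2]
  have hsx : 0 < √x := Real.sqrt_pos.2 (hγ.trans hx)
  have hden : γ * √(γ - N) + √γ * (γ - N) = √γ * √(γ - N) * (√γ + √(γ - N)) := by
    linear_combination -√(γ - N) * Real.sq_sqrt hγ.le - √γ * Real.sq_sqrt hβ.le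
  have h₁ : |w - w'| * (√x)⁻¹ ≤ δ / √γ := by
    rw [div_eq_mul_inv]
    gcongr
    exact (abs_nonneg _).trans hww'
  have h₂ : |w'| * |(√x)⁻¹ - (√y)⁻¹| ≤ N * K / (γ * √(γ - N) + √γ * (γ - N)) := by
    rw [hden, mul_comm N K, mul_div_assoc]
    exact mul_le_mul hw' (abs_inv_sqrt_sub_inv_sqrt_le hγ hβ hx.le hy hxy) (abs_nonneg _)
      ((abs_nonneg _).trans hw')
  calc |(√x)⁻¹ * w - (√y)⁻¹ * w'| = |(w - w') * (√x)⁻¹ + w' * ((√x)⁻¹ - (√y)⁻¹)| := by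
        ring_nf
    _ ≤ |w - w'| * (√x)⁻¹ + |w'| * |(√x)⁻¹ - (√y)⁻¹| :=
        (abs_add_le _ _).trans_eq (by rw [abs_mul, abs_mul, abs_of_pos (inv_pos.2 hsx)])
    _ ≤ δ / √γ + N * K / (γ * √(γ - N) + √γ * (γ - N)) := add_le_add h₁ h₂

theorem roseland_norm_stability_rescaled_general
    {n m : ℕ} (hn : 0 < n) (hm : 0 < m)
    (W Wt : Matrix (Fin n) (Fin m) ℝ)
    (δ C γ : ℝ)
    (hγ : 2 * C * δ + δ ^ 2 < γ)
    (D Dt : Fin n → ℝ)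
    (hD : ∀ i, D i = ∑ j, ∑ k, W i k * W j k)
    (hDt : ∀ i, Dt i = ∑ j, ∑ k, Wt i k * Wt j k)
    (hWnonneg : ∀ i k, 0 ≤ W i k) (hWle : ∀ i k, W i k ≤ C)
    (f : ℝ) (hf : 0 < f)
    (hclose : ∀ i k, |W i k - Wt i k / f| ≤ δ)
    (hdeg : ∀ i, γ < D i / (m * n)) :
    specNorm (Matrix.diagonal (fun i => (Real.sqrt (D i))⁻¹) * W -
        Matrix.diagonal (fun i => (Real.sqrt (Dt i))⁻¹) * Wt) ≤
      δ / Real.sqrt γ +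
        (2 * C * δ + δ ^ 2) * (C + δ) /
          (γ * Real.sqrt (γ - 2 * C * δ - δ ^ 2) +
            Real.sqrt γ * (γ - 2 * C * δ - δ ^ 2)) ∧
    frobNorm (Matrix.diagonal (fun i => (Real.sqrt (D i))⁻¹) * W -
        Matrix.diagonal (fun i => (Real.sqrt (Dt i))⁻¹) * Wt) ≤
      δ / Real.sqrt γ +
        (2 * C * δ + δ ^ 2) * (C + δ) /
          (γ * Real.sqrt (γ - 2 * C * δ - δ ^ 2) +
            Real.sqrt γ * (γ - 2 * C * δ - δ ^ 2)) := by
  set N := 2 * C * δ + δ ^ 2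
  rw [show γ - 2 * C * δ - δ ^ 2 = γ - N by ring]
  set E := δ / √γ + N * (C + δ) / (γ * √(γ - N) + √γ * (γ - N))
  set A := Matrix.diagonal (fun i => (√(D i))⁻¹) * W - Matrix.diagonal (fun i => (√(Dt i))⁻¹) * Wt
  have hmn : (0 : ℝ) < m * n := by positivity
  have hW : ∀ i k, |W i k| ≤ C := fun i k => (abs_of_nonneg (hWnonneg i k)).trans_le (hWle i k)
  have hdiff : ∀ i, |D i / (m * n) - Dt i / f ^ 2 / (m * n)| ≤ N := fun i => by
    have h := abs_affinityDegree_sub_le (W' := fun i k => Wt i k / f) hW hclose i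
    rw [affinityDegree_div, Fintype.card_fin, Fintype.card_fin] at h
    rw [← sub_div, abs_div, abs_of_pos hmn, div_le_iff₀ hmn, hD i, hDt i]
    exact h.trans_eq (by ring)
  have hentry : ∀ i k, |A i k| ≤ E / √(m * n) := fun i k => by
    have hA : A i k = (√(D i))⁻¹ * W i k - (√(Dt i / f ^ 2))⁻¹ * (Wt i k / f) := by
      rw [inv_sqrt_div_sq_mul_div hf]
      simp [A, Matrix.diagonal_mul]
    rw [hA, inv_sqrt_mul_sub_inv_sqrt_mul_eq_div_sqrt hmn, abs_div,
      abs_of_pos (Real.sqrt_pos.2 hmn)]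
    gcongr
    exact abs_inv_sqrt_mul_sub_inv_sqrt_mul_le hγ (hdeg i) (hdiff i) (hclose i k)
      (abs_le_add_of_abs_sub_le (hW i k) (hclose i k))
  have hfrob : frobNorm A ≤ E := calc
    frobNorm A ≤ √(n * m) * (E / √(m * n)) :=
      frobNorm_le_of_forall_abs_le A ((abs_nonneg _).trans (hentry ⟨0, hn⟩ ⟨0, hm⟩)) hentry
    _ = E := by rw [mul_comm (n : ℝ)]; field_simp
  exact ⟨(specNorm_le_frobNorm A).trans hfrob, hfrob⟩

/-- Stability of the Roseland normalized landmark-affinity matrix after a global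
rescaling of the noisy matrix: if `sup_{i,k} |W_{ik} − W̃_{ik}/f| ≤ δ` for some `f > 0`,
then both the spectral and the Frobenius norms of `D^{-1/2} W − D̃^{-1/2} W̃` enjoy the
same bound. -/
theorem roseland_norm_stability_rescaled
    {n m : ℕ} (hn : 0 < n) (hm : 0 < m)
    (W Wt : Matrix (Fin n) (Fin m) ℝ)
    (δ C γ : ℝ) (hδ : 0 ≤ δ) (hC : 0 < C)
    (hγ : 2 * C * δ + δ ^ 2 < γ)
    (D Dt : Fin n → ℝ)
    (hD : ∀ i, D i = ∑ j, ∑ k, W i k * W j k)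
    (hDt : ∀ i, Dt i = ∑ j, ∑ k, Wt i k * Wt j k)
    (hDpos : ∀ i, 0 < D i) (hDtpos : ∀ i, 0 < Dt i)
    (hWnonneg : ∀ i k, 0 ≤ W i k) (hWle : ∀ i k, W i k ≤ C)
    (f : ℝ) (hf : 0 < f)
    (hclose : ∀ i k, |W i k - Wt i k / f| ≤ δ)
    (hdeg : ∀ i, γ < D i / (m * n)) :
    specNorm (Matrix.diagonal (fun i => (Real.sqrt (D i))⁻¹) * W -
        Matrix.diagonal (fun i => (Real.sqrt (Dt i))⁻¹) * Wt) ≤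
      δ / Real.sqrt γ +
        (2 * C * δ + δ ^ 2) * (C + δ) /
          (γ * Real.sqrt (γ - 2 * C * δ - δ ^ 2) +
            Real.sqrt γ * (γ - 2 * C * δ - δ ^ 2)) ∧
    frobNorm (Matrix.diagonal (fun i => (Real.sqrt (D i))⁻¹) * W -
        Matrix.diagonal (fun i => (Real.sqrt (Dt i))⁻¹) * Wt) ≤
      δ / Real.sqrt γ +
        (2 * C * δ + δ ^ 2) * (C + δ) /
          (γ * Real.sqrt (γ - 2 * C * δ - δ ^ 2) +
            Real.sqrt γ * (γ - 2 * C * δ - δ ^ 2)) :=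
  roseland_norm_stability_rescaled_general hn hm W Wt δ C γ hγ D Dt hD hDt hWnonneg hWle f hf hclose
    hdeg
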